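/- Let U be the Lucas sequence with parameters P, Q where Q = ±1, let k ≥ 2, let A be a nonzero integer, and let n_1, …, n_r be pairwise coprime positive integers with all U_{n_i} ≠ 0. If A·y^k = U_{n_1}·…·U_{n_r} for some integer y, then for every prime p not dividing A and every index i, v_p(U_{n_i}) ≡ 0 (mod k). -/
import Mathlib

section aux

variable {P Q : ℤ} {U : ℕ → ℤ}

private lemma lucas_add (h0 : U 0 = 0) (h1 : U 1 = 1)
    (hrec : ∀ n, U (n + 2) = P * U (n + 1) + Q * U n) :
    ∀ b a, U (a + b + 1) = U (a + 1) * U (b + 1) + Q * U a * U b := by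
  intro b
  induction b using Nat.strong_induction_on with
  | _ b ih =>
    match b with
    | 0 => intro a; simp [h0, h1]
    | 1 =>
      intro a
      have h2 : U 2 = P := by have := hrec 0; simp [h0, h1] at this; simpa using this
      rw [show a + 1 + 1 = a + 2 by ring, hrec a, h2, h1]; ring
    | b + 2 =>
      intro a
      have e1 := ih b (by omega) a
      have e2 := ih (b + 1) (by omega) a
      have := hrec (a + b + 1)
      rw [show a + (b + 2) + 1 = a + b + 1 + 2 by ring, this,
        show a + b + 1 + 1 = a + (b+1) + 1 by ring, e2, e1, hrec (b+1), hrec b]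
      ring

private lemma lucas_consec {p : ℕ} (hp : p.Prime) (hQ : Q = 1 ∨ Q = -1)
    (h1 : U 1 = 1) (hrec : ∀ n, U (n + 2) = P * U (n + 1) + Q * U n) :
    ∀ m, (p : ℤ) ∣ U m → (p : ℤ) ∣ U (m + 1) → False := by
  intro m
  induction m with
  | zero =>
    intro _ h
    rw [h1] at h
    have h' : p ≤ 1 := by exact_mod_cast Int.le_of_dvd one_pos h
    have := hp.one_lt
    omega
  | succ m ih =>
    intro hm hm1
    have : (p : ℤ) ∣ Q * U m := by
      have := hrec m
      have : Q * U m = U (m + 2) - P * U (m + 1) := by rw [this]; ring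
      rw [this]
      exact dvd_sub hm1 (Dvd.dvd.mul_left hm _)
    have hdm : (p : ℤ) ∣ U m := by
      rcases hQ with h | h <;> subst h <;> simpa using this
    exact ih hdm hm

private lemma lucas_cop {p : ℕ} (hp : p.Prime) (hQ : Q = 1 ∨ Q = -1)
    (h0 : U 0 = 0) (h1 : U 1 = 1)
    (hrec : ∀ n, U (n + 2) = P * U (n + 1) + Q * U n) :
    ∀ s m d, m + d ≤ s → 0 < m → 0 < d → Nat.Coprime m d →
      (p : ℤ) ∣ U m → (p : ℤ) ∣ U d → False := by
  intro s
  induction s with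
  | zero => intro m d h hm hd _ _ _; omega
  | succ s ih =>
    intro m d hs hm hd hcop hum hud
    rcases lt_trichotomy m d with hlt | heq | hgt
    · set e := d - m with he
      have hde : d = e + m := by omega
      have he1 : 0 < e := by omega
      have hfact : U d = U (m + 1) * U e + Q * U m * U (e - 1) := by
        have := lucas_add h0 h1 hrec (e - 1) m
        rw [show m + (e-1) + 1 = d by omega, show e - 1 + 1 = e by omega] at this
        exact this
      have hdvd : (p : ℤ) ∣ U (m + 1) * U e := by
        have : U (m+1) * U e = U d - Q * U m * U (e-1) := by rw [hfact]; ring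
        rw [this]
        exact dvd_sub hud (Dvd.dvd.mul_right (Dvd.dvd.mul_left hum _) _)
      have hnm1 : ¬ (p : ℤ) ∣ U (m + 1) := fun h => lucas_consec hp hQ h1 hrec m hum h
      have hue : (p : ℤ) ∣ U e := ((Int.Prime.dvd_mul' (by exact_mod_cast hp) hdvd).resolve_left hnm1)
      have hcop' : Nat.Coprime m e := by
        have : Nat.Coprime m (e + m) := hde ▸ hcop
        simpa [Nat.coprime_add_self_right] using this
      exact ih m e (by omega) hm he1 hcop' hum hue
    · subst heq
      have : m = 1 := (Nat.coprime_self m).mp hcop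
      subst this
      rw [h1] at hum
      have h' : p ≤ 1 := by exact_mod_cast Int.le_of_dvd one_pos hum
      have := hp.one_lt
      omega
    · set e := m - d with he
      have hde : m = e + d := by omega
      have he1 : 0 < e := by omega
      have hfact : U m = U (d + 1) * U e + Q * U d * U (e - 1) := by
        have := lucas_add h0 h1 hrec (e - 1) d
        rw [show d + (e-1) + 1 = m by omega, show e - 1 + 1 = e by omega] at this
        exact this
      have hdvd : (p : ℤ) ∣ U (d + 1) * U e := by
        have : U (d+1) * U e = U m - Q * U d * U (e-1) := by rw [hfact]; ring
        rw [this]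
        exact dvd_sub hum (Dvd.dvd.mul_right (Dvd.dvd.mul_left hud _) _)
      have hnm1 : ¬ (p : ℤ) ∣ U (d + 1) := fun h => lucas_consec hp hQ h1 hrec d hud h
      have hue : (p : ℤ) ∣ U e := ((Int.Prime.dvd_mul' (by exact_mod_cast hp) hdvd).resolve_left hnm1)
      have hcop' : Nat.Coprime e d := by
        have : Nat.Coprime (e + d) d := hde ▸ hcop
        simpa [Nat.coprime_add_self_left] using this
      exact ih e d (by omega) he1 hd hcop' hue hud

private lemma padicValInt_prod {p : ℕ} [Fact p.Prime] {ι : Type*} (s : Finset ι) (f : ι → ℤ)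
    (hf : ∀ i ∈ s, f i ≠ 0) :
    padicValInt p (∏ i ∈ s, f i) = ∑ i ∈ s, padicValInt p (f i) := by
  classical
  induction s using Finset.induction with
  | empty => simp
  | @insert a t h ih =>
    rw [Finset.prod_insert h, Finset.sum_insert h,
      padicValInt.mul (hf a (Finset.mem_insert_self a t))
        (Finset.prod_ne_zero_iff.mpr fun i hi => hf i (Finset.mem_insert_of_mem hi)),
      ih fun i hi => hf i (Finset.mem_insert_of_mem hi)]

private lemma padicValInt_pow {p : ℕ} [Fact p.Prime] (k : ℕ) {y : ℤ} (hy : y ≠ 0) :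
    padicValInt p (y ^ k) = k * padicValInt p y := by
  induction k with
  | zero => simp
  | succ k ih =>
    rw [pow_succ, padicValInt.mul (pow_ne_zero k hy) hy, ih]; ring

end aux

theorem lucas_valuation_mod_k
    (P Q : ℤ) (hQ : Q = 1 ∨ Q = -1)
    (U : ℕ → ℤ) (h0 : U 0 = 0) (h1 : U 1 = 1)
    (hrec : ∀ n, U (n + 2) = P * U (n + 1) + Q * U n)
    (k : ℕ) (hk : 2 ≤ k)
    (A : ℤ) (hA : A ≠ 0)
    (r : ℕ) (n : Fin r → ℕ) (hpos : ∀ i, 0 < n i)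
    (hcop : ∀ i j, i ≠ j → Nat.Coprime (n i) (n j))
    (hne : ∀ i, U (n i) ≠ 0)
    (y : ℤ) (heq : A * y ^ k = ∏ i, U (n i)) :
    ∀ p : ℕ, p.Prime → ¬ ((p : ℤ) ∣ A) →
      ∀ i, k ∣ padicValInt p (U (n i)) := by
  intro p hp hpA i
  haveI : Fact p.Prime := ⟨hp⟩
  by_cases hdvd : (p : ℤ) ∣ U (n i)
  · have hy : y ≠ 0 := by
      intro hy0
      apply Finset.prod_ne_zero_iff.mpr (fun j _ => hne j)
      rw [← heq, hy0, zero_pow (by omega), mul_zero]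
    have hothers : ∀ j, j ≠ i → padicValInt p (U (n j)) = 0 := by
      intro j hj
      apply padicValInt.eq_zero_of_not_dvd
      intro hdj
      exact lucas_cop hp hQ h0 h1 hrec (n i + n j) (n i) (n j) le_rfl (hpos i) (hpos j)
        (hcop i j (Ne.symm hj)) hdvd hdj
    have hsum : padicValInt p (∏ j, U (n j)) = padicValInt p (U (n i)) := by
      rw [padicValInt_prod Finset.univ _ (fun j _ => hne j),
        Finset.sum_eq_single i (fun j _ hj => hothers j hj) (by simp)]
    have hleft : padicValInt p (A * y ^ k) = k * padicValInt p y := by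
      rw [padicValInt.mul hA (pow_ne_zero k hy), padicValInt.eq_zero_of_not_dvd hpA,
        padicValInt_pow k hy, zero_add]
    rw [heq, hsum] at hleft
    exact ⟨_, hleft⟩
  · rw [padicValInt.eq_zero_of_not_dvd hdvd]
    exact dvd_zero k
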